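/- arXiv:2402.12683 — 2 statements merged into one kernel-verified Lean document; each statement's English description precedes it below -/
import Mathlib

section
/- Let Z_1,...,Z_{n+1} be exchangeable real random variables and let Z_{(k)} denote the k-th order statistic of Z_1,...,Z_n. For α ∈ (0,1) with ⌈(n+1)(1-α)⌉ ≤ n, P(Z_{n+1} ≤ Z_{(⌈(n+1)(1-α)⌉)}) ≥ 1-α. -/
open MeasureTheory ProbabilityTheory Real Set

noncomputable def kthSmallest {n : ℕ} (v : Fin n → ℝ) (k : ℕ) : ℝ :=
  ((List.ofFn v : Multiset ℝ).sort (· ≤ ·)).getD (k-1) 0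

lemma sorted_lt_iff_countP (l : List ℝ) (hs : l.Pairwise (· ≤ ·)) (m : ℕ) (hm : m < l.length) (t : ℝ) :
    l[m] < t ↔ m < l.countP (fun x => decide (x < t)) := by
  have hpair := List.pairwise_iff_getElem.1 hs
  constructor
  · intro h
    have htake : ∀ x ∈ l.take (m+1), (fun x => decide (x < t)) x = true := by
      intro x hx
      obtain ⟨i, hi, rfl⟩ := List.mem_iff_getElem.1 hx
      rw [List.getElem_take]
      simp only [decide_eq_true_eq]
      have hi' : i < m + 1 := lt_of_lt_of_le hi (by simp [List.length_take])
      rcases Nat.lt_or_ge i m with h2 | h2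
      · exact lt_of_le_of_lt (hpair i m (by omega) hm h2) h
      · have : i = m := by omega
        subst this; exact h
    have h1 : (l.take (m+1)).countP (fun x => decide (x < t)) = m + 1 := by
      rw [List.countP_eq_length.2 htake, List.length_take]
      omega
    calc m < m + 1 := Nat.lt_succ_self m
    _ = (l.take (m+1)).countP _ := h1.symm
    _ ≤ l.countP (fun x => decide (x < t)) := by
        conv_rhs => rw [← List.take_append_drop (m+1) l]
        rw [List.countP_append]; omega
  · intro h
    by_contra hc
    push_neg at hc
    have hdrop : (l.drop m).countP (fun x => decide (x < t)) = 0 := by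
      rw [List.countP_eq_zero]
      intro x hx
      obtain ⟨i, hi, rfl⟩ := List.mem_iff_getElem.1 hx
      rw [List.getElem_drop]
      simp only [decide_eq_true_eq, not_lt]
      rcases Nat.eq_zero_or_pos i with rfl | hpos
      · simpa using hc
      · have hlen : m + i < l.length := by
          have := hi; rw [List.length_drop] at this; omega
        exact le_trans hc (hpair m (m+i) hm hlen (by omega))
    have : l.countP (fun x => decide (x < t)) ≤ m := by
      conv_lhs => rw [← List.take_append_drop m l]
      rw [List.countP_append, hdrop]
      have := List.countP_le_length (p := fun x => decide (x < t)) (l := l.take m)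
      simp [List.length_take] at this ⊢
      omega
    omega

lemma le_kthSmallest_iff {n : ℕ} (v : Fin n → ℝ) (k : ℕ) (hk1 : 1 ≤ k) (hkn : k ≤ n) (t : ℝ) :
    t ≤ kthSmallest v k ↔ (Finset.univ.filter (fun i => v i < t)).card < k := by
  set l := ((List.ofFn v : Multiset ℝ).sort (· ≤ ·)) with hl
  have hlen : l.length = n := by
    rw [hl, Multiset.length_sort]; simp
  have hm : k - 1 < l.length := by omega
  have hsort : l.Pairwise (· ≤ ·) := Multiset.pairwise_sort _ _
  have hcount : l.countP (fun x => decide (x < t)) =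
      (Finset.univ.filter (fun i => v i < t)).card := by
    have hperm : l.Perm (List.ofFn v) := Multiset.coe_eq_coe.1 (Multiset.sort_eq _ _)
    rw [hperm.countP_eq]
    rw [List.ofFn_eq_map, List.countP_map, List.countP_eq_length_filter]
    rw [show (Finset.univ : Finset (Fin n)) = ⟨List.finRange n, List.nodup_finRange n⟩ from rfl]
    rfl
  have hgetD : kthSmallest v k = l[k-1] := by
    rw [kthSmallest, ← hl, List.getD_eq_getElem l 0 hm]
  rw [hgetD, ← hcount, ← not_lt, sorted_lt_iff_countP l hsort (k-1) hm t, not_lt]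
  omega

lemma rank_card_ge {N : ℕ} (W : Fin N → ℝ) (k : ℕ) (hk : k ≤ N) :
    k ≤ (Finset.univ.filter (fun j =>
      (Finset.univ.filter (fun i => i ≠ j ∧ W i < W j)).card < k)).card := by
  set σ := Tuple.sort W with hσ
  have hmono : Monotone (W ∘ σ) := Tuple.monotone_sort W
  have hinj : Function.Injective (fun p : Fin k => σ (Fin.castLE hk p)) := by
    intro a b hab
    exact Fin.castLE_injective hk (σ.injective hab)
  have hsub : (Finset.univ : Finset (Fin k)).image (fun p => σ (Fin.castLE hk p)) ⊆
      Finset.univ.filter (fun j =>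
        (Finset.univ.filter (fun i => i ≠ j ∧ W i < W j)).card < k) := by
    intro j hj
    simp only [Finset.mem_image, Finset.mem_univ, true_and] at hj
    obtain ⟨p, rfl⟩ := hj
    simp only [Finset.mem_filter, Finset.mem_univ, true_and]
    set q : Fin N := Fin.castLE hk p with hq
    have hss : Finset.univ.filter (fun i => i ≠ σ q ∧ W i < W (σ q)) ⊆
        (Finset.Iio q).image σ := by
      intro i hi
      simp only [Finset.mem_filter, Finset.mem_univ, true_and] at hi
      simp only [Finset.mem_image, Finset.mem_Iio]
      refine ⟨σ.symm i, ?_, by simp⟩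
      by_contra hle
      push_neg at hle
      have := hmono hle
      simp only [Function.comp_apply, Equiv.apply_symm_apply] at this
      exact absurd this (not_le.2 hi.2)
    calc (Finset.univ.filter (fun i => i ≠ σ q ∧ W i < W (σ q))).card
        ≤ ((Finset.Iio q).image σ).card := Finset.card_le_card hss
      _ = (Finset.Iio q).card := Finset.card_image_of_injective _ σ.injective
      _ = q := Fin.card_Iio q
      _ = (p : ℕ) := rfl
      _ < k := p.isLt
  calc k = ((Finset.univ : Finset (Fin k)).image (fun p => σ (Fin.castLE hk p))).card := by
        rw [Finset.card_image_of_injective _ hinj, Finset.card_univ, Fintype.card_fin]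
    _ ≤ _ := Finset.card_le_card hsub

/-- Conformal quantile lemma for exchangeable variables. -/
theorem stmt_2 {Ω : Type*} [MeasurableSpace Ω] (P : Measure Ω) [IsProbabilityMeasure P]
    (n : ℕ) (Z : Fin (n+1) → Ω → ℝ) (hmeas : ∀ i, Measurable (Z i))
    (hexch : ∀ σ : Equiv.Perm (Fin (n+1)),
      Measure.map (fun ω i => Z (σ i) ω) P = Measure.map (fun ω i => Z i ω) P)
    (α : ℝ) (hα : α ∈ Set.Ioo (0:ℝ) 1)
    (k : ℕ) (hk : (k : ℤ) = ⌈((n:ℝ)+1)*(1-α)⌉) (hkn : k ≤ n) :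
    P {ω | Z (Fin.last n) ω ≤ kthSmallest (fun i : Fin n => Z i.castSucc ω) k} ≥
      ENNReal.ofReal (1 - α) := by
  obtain ⟨hα0, hα1⟩ := hα
  have hx : (0:ℝ) < ((n:ℝ)+1)*(1-α) := by
    have hn : (0:ℝ) ≤ (n:ℝ) := Nat.cast_nonneg n
    nlinarith
  have hk1 : 1 ≤ k := by
    have h0 : (0:ℤ) < (k:ℤ) := hk ▸ Int.ceil_pos.2 hx
    exact_mod_cast h0
  set W : Ω → (Fin (n+1) → ℝ) := fun ω i => Z i ω with hWdef
  have hWmeas : Measurable W := measurable_pi_lambda _ hmeas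
  set rnk : (Fin (n+1) → ℝ) → Fin (n+1) → ℕ :=
    fun w j => (Finset.univ.filter (fun i => i ≠ j ∧ w i < w j)).card with hrnk
  have hrmeas : ∀ j, Measurable (fun w => rnk w j) := by
    intro j
    have heq : (fun w => rnk w j) = fun w => ∑ i, if i ≠ j ∧ w i < w j then 1 else 0 := by
      funext w; simp only [hrnk]; rw [Finset.card_filter]
    rw [heq]
    apply Finset.measurable_sum
    intro i _
    by_cases hij : i = j
    · simp [hij]
    · have hms : MeasurableSet {w : Fin (n+1) → ℝ | i ≠ j ∧ w i < w j} := by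
        have h1 : Measurable (fun w : Fin (n+1) → ℝ => w i) := measurable_pi_apply i
        have h2 : Measurable (fun w : Fin (n+1) → ℝ => w j) := measurable_pi_apply j
        simpa [hij] using measurableSet_lt h1 h2
      exact Measurable.ite hms measurable_const measurable_const
  set S : Fin (n+1) → Set (Fin (n+1) → ℝ) := fun j => {w | rnk w j < k} with hS
  have hSmeas : ∀ j, MeasurableSet (S j) := by
    intro j
    have heq : S j = (fun w => rnk w j) ⁻¹' {m | m < k} := rfl
    rw [heq]
    exact (hrmeas j) (MeasurableSpace.measurableSet_top)
  set A : Fin (n+1) → Set Ω := fun j => W ⁻¹' (S j) with hA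
  have hAmeas : ∀ j, MeasurableSet (A j) := fun j => hWmeas (hSmeas j)
  -- all A j have the same probability
  have hAeq : ∀ j, P (A j) = P (A (Fin.last n)) := by
    intro j
    set τ : Equiv.Perm (Fin (n+1)) := Equiv.swap j (Fin.last n) with hτ
    set c : (Fin (n+1) → ℝ) → (Fin (n+1) → ℝ) := fun w => w ∘ τ with hc
    have hcmeas : Measurable c :=
      measurable_pi_lambda _ (fun i => measurable_pi_apply (τ i))
    have hpre : S j = c ⁻¹' (S (Fin.last n)) := by
      ext w
      simp only [hS, hc, Set.mem_preimage, Set.mem_setOf_eq]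
      have hrank : rnk (w ∘ τ) (Fin.last n) = rnk w j := by
        simp only [hrnk]
        apply Finset.card_bij (fun i _ => τ i)
        · intro i hi
          simp only [Finset.mem_filter, Finset.mem_univ, true_and,
            Function.comp_apply] at hi ⊢
          refine ⟨?_, ?_⟩
          · intro hcon
            exact hi.1 (by
              have : τ i = τ (Fin.last n) := by
                rw [hcon, hτ, Equiv.swap_apply_right]
              exact τ.injective this)
          · have : τ (Fin.last n) = j := by rw [hτ, Equiv.swap_apply_right]
            have h2 := hi.2
            rw [this] at h2
            exact h2
        · intro a ha b hb hab
          exact τ.injective hab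
        · intro b hb
          simp only [Finset.mem_filter, Finset.mem_univ, true_and] at hb
          refine ⟨τ.symm b, ?_, by simp⟩
          simp only [Finset.mem_filter, Finset.mem_univ, true_and,
            Function.comp_apply, Equiv.apply_symm_apply]
          refine ⟨?_, ?_⟩
          · intro hcon
            exact hb.1 (by rw [← τ.apply_symm_apply b, hcon, hτ, Equiv.swap_apply_right])
          · have : τ (Fin.last n) = j := by rw [hτ, Equiv.swap_apply_right]
            rw [this]
            exact hb.2
      rw [hrank]
    have hmapW : Measure.map W P (S (Fin.last n)) = P (A (Fin.last n)) := by
      rw [Measure.map_apply hWmeas (hSmeas _)]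
    have hcomp : c ∘ W = fun ω i => Z (τ i) ω := rfl
    calc P (A j) = Measure.map W P (S j) := (Measure.map_apply hWmeas (hSmeas j)).symm
      _ = Measure.map W P (c ⁻¹' (S (Fin.last n))) := by rw [hpre]
      _ = Measure.map c (Measure.map W P) (S (Fin.last n)) := by
          rw [Measure.map_map hcmeas hWmeas]
          rw [Measure.map_apply (hcmeas.comp hWmeas) (hSmeas _),
            Measure.map_apply hWmeas (hcmeas (hSmeas _))]
          rfl
      _ = Measure.map (fun ω i => Z (τ i) ω) P (S (Fin.last n)) := by
          rw [Measure.map_map hcmeas hWmeas, hcomp]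
      _ = Measure.map W P (S (Fin.last n)) := by rw [hexch τ]
      _ = P (A (Fin.last n)) := hmapW
  -- sum bound
  have hsum : (k : ENNReal) ≤ ∑ j : Fin (n+1), P (A j) := by
    have hind : ∀ j, P (A j) = ∫⁻ ω, (A j).indicator (fun _ => (1:ENNReal)) ω ∂P := by
      intro j
      rw [lintegral_indicator (hAmeas j)]
      simp
    calc (k : ENNReal) = ∫⁻ _, (k : ENNReal) ∂P := by simp
      _ ≤ ∫⁻ ω, ∑ j : Fin (n+1), (A j).indicator (fun _ => (1:ENNReal)) ω ∂P := by
          apply lintegral_mono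
          intro ω
          show (k : ENNReal) ≤ ∑ j : Fin (n+1), (A j).indicator (fun _ => (1:ENNReal)) ω
          have hcard := rank_card_ge (W ω) k (by omega)
          have heq : ∑ j : Fin (n+1), (A j).indicator (fun _ => (1:ENNReal)) ω =
              ((Finset.univ.filter (fun j => rnk (W ω) j < k)).card : ENNReal) := by
            rw [Finset.card_filter]
            push_cast
            apply Finset.sum_congr rfl
            intro j _
            by_cases hj : rnk (W ω) j < k
            · simp [Set.indicator_apply, hA, hS, hj]
            · simp [Set.indicator_apply, hA, hS, hj]
          rw [heq]
          exact_mod_cast Nat.cast_le.2 hcard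
      _ = ∑ j : Fin (n+1), P (A j) := by
          rw [lintegral_finset_sum]
          · exact Finset.sum_congr rfl (fun j _ => (hind j).symm)
          · exact fun j _ => Measurable.indicator measurable_const (hAmeas j)
  have hsumconst : ∑ j : Fin (n+1), P (A j) = ((n:ENNReal)+1) * P (A (Fin.last n)) := by
    rw [Finset.sum_congr rfl (fun j _ => hAeq j), Finset.sum_const, Finset.card_univ,
      Fintype.card_fin, nsmul_eq_mul]
    push_cast
    ring
  have hmain : ((n:ENNReal)+1) * ENNReal.ofReal (1-α) ≤ ((n:ENNReal)+1) * P (A (Fin.last n)) := by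
    rw [← hsumconst]
    refine le_trans ?_ hsum
    have hreal : ((n:ℝ)+1)*(1-α) ≤ (k:ℝ) := by
      have h1 : (((n:ℝ)+1)*(1-α)) ≤ (⌈((n:ℝ)+1)*(1-α)⌉ : ℝ) := Int.le_ceil _
      rw [← hk] at h1
      exact_mod_cast h1
    calc ((n:ENNReal)+1) * ENNReal.ofReal (1-α)
        = ENNReal.ofReal (((n:ℝ)+1)*(1-α)) := by
          rw [ENNReal.ofReal_mul (by positivity)]
          congr 1
          rw [ENNReal.ofReal_add (by positivity) zero_le_one]
          simp
      _ ≤ ENNReal.ofReal (k:ℝ) := ENNReal.ofReal_le_ofReal hreal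
      _ = (k : ENNReal) := by simp [ENNReal.ofReal_natCast]
  have hfinal : ENNReal.ofReal (1-α) ≤ P (A (Fin.last n)) := by
    have hne : ((n:ENNReal)+1) ≠ 0 := by simp
    have hnt : ((n:ENNReal)+1) ≠ ⊤ := by simp [ENNReal.add_eq_top]
    exact (ENNReal.mul_le_mul_iff_right hne hnt).1 hmain
  -- event equality
  have hEv : {ω | Z (Fin.last n) ω ≤ kthSmallest (fun i : Fin n => Z i.castSucc ω) k} =
      A (Fin.last n) := by
    ext ω
    simp only [Set.mem_setOf_eq, hA, hS, Set.mem_preimage]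
    rw [le_kthSmallest_iff _ k hk1 hkn]
    have hcard : (Finset.univ.filter (fun i : Fin n => Z i.castSucc ω < Z (Fin.last n) ω)).card =
        rnk (W ω) (Fin.last n) := by
      simp only [hrnk]
      apply Finset.card_bij (fun i _ => Fin.castSucc i)
      · intro i hi
        simp only [Finset.mem_filter, Finset.mem_univ, true_and] at hi ⊢
        exact ⟨(Fin.castSucc_lt_last i).ne, hi⟩
      · intro a _ b _ hab
        exact Fin.castSucc_injective n hab
      · intro b hb
        simp only [Finset.mem_filter, Finset.mem_univ, true_and] at hb
        refine ⟨b.castPred hb.1, ?_, by simp⟩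
        simp only [Finset.mem_filter, Finset.mem_univ, true_and, Fin.castSucc_castPred]
        exact hb.2
    rw [hcard]
  rw [hEv]
  exact hfinal
end

section
/- CQR coverage: let (X_i,Y_i), i=1,...,n+1 be exchangeable, let q_lo, q_hi : X → ℝ be fixed functions (trained quantile estimates at levels α/2 and 1-α/2), define scores E_i = max(q_lo(X_i) - Y_i, Y_i - q_hi(X_i)), and let Q be the ⌈(n+1)(1-α)⌉-th order statistic of E_1,...,E_n (assumed ≤ n). Then P(Y_{n+1} ∈ [q_lo(X_{n+1}) - Q, q_hi(X_{n+1}) + Q]) ≥ 1-α. -/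
/-!
Call an index `j` good when fewer than `k` of the scores are strictly below `E_j`. Every index
whose score is at most the `k`-th smallest one is good, so in every realisation at least `k` of
the `n + 1` indices are good; hence the probabilities that `j` is good sum to at least `k`. By
exchangeability these probabilities all agree, so the test index is good with probability at
least `k / (n + 1) ≥ 1 - α`. When it is good, fewer than `k` calibration scores lie below `E_{n+1}`,
so `E_{n+1} ≤ Q`, which is exactly the coverage event.
-/

open MeasureTheory ProbabilityTheory Real Set

open Finset
open scoped ENNReal

namespace List.Pairwise

variable {α : Type*} [LinearOrder α] {l : List α}

theorem succ_le_countP_le_getElem (hl : l.Pairwise (· ≤ ·)) {j : ℕ} (hj : j < l.length) :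
    j + 1 ≤ l.countP (· ≤ l[j]) := by
  have hprefix : (l.take (j + 1)).countP (· ≤ l[j]) = (l.take (j + 1)).length := by
    refine List.countP_eq_length.2 fun a ha => ?_
    obtain ⟨i, hi, rfl⟩ := List.mem_take_iff_getElem.1 ha
    simpa using hl.rel_get_of_le (a := ⟨i, by omega⟩) (b := ⟨j, hj⟩) (by simp; omega)
  have hsub := (List.take_sublist (j + 1) l).countP_le (p := (· ≤ l[j]))
  rw [hprefix, List.length_take] at hsub
  omega

theorem countP_lt_getElem_le (hl : l.Pairwise (· ≤ ·)) {j : ℕ} (hj : j < l.length) :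
    l.countP (· < l[j]) ≤ j := by
  have hsuffix : (l.drop j).countP (· < l[j]) = 0 := by
    refine List.countP_eq_zero.2 fun a ha => ?_
    obtain ⟨i, hi, rfl⟩ := List.mem_drop_iff_getElem.1 ha
    simpa using hl.rel_get_of_le (a := ⟨j, hj⟩) (b := ⟨j + i, by omega⟩) (by simp)
  calc l.countP (· < l[j]) = (l.take j ++ l.drop j).countP (· < l[j]) := by
        rw [List.take_append_drop]
    _ ≤ j := by
        rw [List.countP_append, hsuffix, add_zero]
        exact (List.countP_le_length).trans (List.length_take_le _ _)

end List.Pairwise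

section kthSmallest

variable {n k : ℕ}

theorem card_filter_eq_countP_sort (v : Fin n → ℝ) (p : ℝ → Prop) [DecidablePred p] :
    #{i | p (v i)} = ((List.ofFn v : Multiset ℝ).sort (· ≤ ·)).countP p := by
  rw [← Multiset.coe_countP, Multiset.sort_eq, ← Fin.univ_val_map, Multiset.countP_map]
  rfl

theorem kthSmallest_eq_getElem_sort (v : Fin n → ℝ) (hk : 1 ≤ k) (hkn : k ≤ n) :
    kthSmallest v k = ((List.ofFn v : Multiset ℝ).sort (· ≤ ·))[k - 1]'(by simp; omega) :=
  List.getD_eq_getElem _ _ _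

theorem le_card_filter_le_kthSmallest (v : Fin n → ℝ) (hk : 1 ≤ k) (hkn : k ≤ n) :
    k ≤ #{i | v i ≤ kthSmallest v k} := by
  rw [card_filter_eq_countP_sort v (· ≤ kthSmallest v k), kthSmallest_eq_getElem_sort v hk hkn]
  have := (Multiset.pairwise_sort (List.ofFn v : Multiset ℝ) (· ≤ ·)).succ_le_countP_le_getElem
    (j := k - 1) (by simp; omega)
  omega

theorem card_filter_lt_kthSmallest_lt (v : Fin n → ℝ) (hk : 1 ≤ k) (hkn : k ≤ n) :
    #{i | v i < kthSmallest v k} < k := by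
  rw [card_filter_eq_countP_sort v (· < kthSmallest v k), kthSmallest_eq_getElem_sort v hk hkn]
  have := (Multiset.pairwise_sort (List.ofFn v : Multiset ℝ) (· ≤ ·)).countP_lt_getElem_le
    (j := k - 1) (by simp; omega)
  omega

theorem le_kthSmallest_of_card_filter_lt (v : Fin n → ℝ) (hk : 1 ≤ k) (hkn : k ≤ n) {c : ℝ}
    (hc : #{i | v i < c} < k) : c ≤ kthSmallest v k := by
  by_contra! hlt
  have hmono : #{i | v i ≤ kthSmallest v k} ≤ #{i | v i < c} :=
    card_le_card <| monotone_filter_right _ fun _ _ hi => hi.trans_lt hlt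
  have := le_card_filter_le_kthSmallest v hk hkn
  omega

end kthSmallest

theorem card_filter_castSucc_le {m : ℕ} (p : Fin (m + 1) → Prop) [DecidablePred p] :
    #{i : Fin m | p i.castSucc} ≤ #{i | p i} :=
  card_le_card_of_injOn Fin.castSucc (fun i hi => by simpa using hi)
    (Fin.castSucc_injective m).injOn

noncomputable def strictRank {ι : Type*} [Fintype ι] (w : ι → ℝ) (j : ι) : ℕ := #{i | w i < w j}

theorem le_card_filter_strictRank_lt {n k : ℕ} (w : Fin n → ℝ) (hk : 1 ≤ k) (hkn : k ≤ n) :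
    k ≤ #{j | strictRank w j < k} := by
  refine (le_card_filter_le_kthSmallest w hk hkn).trans
    (card_le_card <| monotone_filter_right _ fun j _ hj => ?_)
  calc strictRank w j ≤ #{i | w i < kthSmallest w k} :=
        card_le_card <| monotone_filter_right _ fun _ _ hi => lt_of_lt_of_le hi hj
    _ < k := card_filter_lt_kthSmallest_lt w hk hkn

theorem strictRank_comp_perm {ι : Type*} [Fintype ι] (w : ι → ℝ) (σ : Equiv.Perm ι) (j : ι) :
    strictRank (w ∘ σ) j = strictRank w (σ j) :=
  card_equiv σ (by simp)

theorem measurable_strictRank {ι : Type*} [Fintype ι] (j : ι) :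
    Measurable fun w : ι → ℝ => strictRank w j := by
  simp only [strictRank, card_filter]
  refine Finset.measurable_sum _ fun i _ => Measurable.ite ?_ measurable_const measurable_const
  exact measurableSet_lt (measurable_pi_apply i) (measurable_pi_apply j)

theorem MeasureTheory.Measure.natCast_mul_measure_univ_le_sum {Ω ι : Type*} [MeasurableSpace Ω]
    [Fintype ι] (P : Measure Ω) {A : ι → Set Ω} [∀ ω i, Decidable (ω ∈ A i)]
    (hA : ∀ i, MeasurableSet (A i)) {k : ℕ} (hk : ∀ ω, k ≤ #{i | ω ∈ A i}) :
    k * P univ ≤ ∑ i, P (A i) := by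
  have hcount : ∀ ω, (k : ℝ≥0∞) ≤ ∑ i, (A i).indicator 1 ω := fun ω => by
    simp only [indicator_apply, Pi.one_apply, sum_boole]
    exact_mod_cast hk ω
  calc k * P univ = ∫⁻ _, (k : ℝ≥0∞) ∂P := (lintegral_const _).symm
    _ ≤ ∫⁻ ω, ∑ i, (A i).indicator 1 ω ∂P := lintegral_mono hcount
    _ = ∑ i, P (A i) := by
      rw [lintegral_finsetSum (f := fun i ω => (A i).indicator 1 ω) _
        fun i _ => measurable_const.indicator (hA i)]
      simp only [lintegral_indicator_one (hA _)]

def Exchangeable {Ω ι β : Type*} [MeasurableSpace Ω] [MeasurableSpace β] (X : ι → Ω → β)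
    (P : Measure Ω) : Prop :=
  ∀ σ : Equiv.Perm ι, P.map (fun ω i => X (σ i) ω) = P.map (fun ω i => X i ω)

namespace Exchangeable

variable {Ω ι β γ : Type*} [MeasurableSpace Ω] [MeasurableSpace β] [MeasurableSpace γ]
  {X : ι → Ω → β} {P : Measure Ω}

theorem comp (hX : Exchangeable X P) (hXm : ∀ i, Measurable (X i)) {f : β → γ}
    (hf : Measurable f) : Exchangeable (fun i ω => f (X i ω)) P := by
  intro σ
  have hF : Measurable fun (x : ι → β) i => f (x i) := by fun_prop
  have := congrArg (·.map fun (x : ι → β) i => f (x i)) (hX σ)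
  rwa [Measure.map_map hF (by fun_prop), Measure.map_map hF (by fun_prop)] at this

theorem measure_preimage_perm (hX : Exchangeable X P) (hXm : ∀ i, Measurable (X i))
    (σ : Equiv.Perm ι) {B : Set (ι → β)} (hB : MeasurableSet B) :
    P ((fun ω i => X (σ i) ω) ⁻¹' B) = P ((fun ω i => X i ω) ⁻¹' B) := by
  rw [← Measure.map_apply (by fun_prop) hB, ← Measure.map_apply (by fun_prop) hB, hX σ]

end Exchangeable

theorem Exchangeable.natCast_le_mul_measure_le_kthSmallest {Ω : Type*} [MeasurableSpace Ω]
    {P : Measure Ω} [IsProbabilityMeasure P] {m k : ℕ} {S : Fin (m + 1) → Ω → ℝ}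
    (hS : Exchangeable S P) (hSm : ∀ i, Measurable (S i)) (hk : 1 ≤ k) (hkm : k ≤ m) :
    (k : ℝ≥0∞) ≤
      (m + 1) * P {ω | S (Fin.last m) ω ≤ kthSmallest (fun i : Fin m => S i.castSucc ω) k} := by
  set Φ : Ω → Fin (m + 1) → ℝ := fun ω i => S i ω
  have hΦ : Measurable Φ := by fun_prop
  set A : Fin (m + 1) → Set Ω := fun j => {ω | strictRank (Φ ω) j < k}
  have hrank : ∀ j, MeasurableSet {w : Fin (m + 1) → ℝ | strictRank w j < k} := fun j =>
    measurable_strictRank j measurableSet_Iio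
  have hequal : ∀ j, P (A j) = P (A (Fin.last m)) := fun j => by
    have hswap : (fun ω i => S (Equiv.swap j (Fin.last m) i) ω) ⁻¹' {w | strictRank w j < k} =
        A (Fin.last m) := Set.ext fun ω => by
      change strictRank (Φ ω ∘ Equiv.swap j (Fin.last m)) j < k ↔ strictRank (Φ ω) _ < k
      rw [strictRank_comp_perm, Equiv.swap_apply_left]
    rw [← hswap, hS.measure_preimage_perm hSm _ (hrank j)]
    rfl
  have hsum : (k : ℝ≥0∞) ≤ ∑ j, P (A j) := by
    simpa using P.natCast_mul_measure_univ_le_sum (A := A) (fun j => (hrank j).preimage hΦ) fun ω =>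
      le_card_filter_strictRank_lt (Φ ω) hk (by omega)
  have hsub : A (Fin.last m) ⊆
      {ω | S (Fin.last m) ω ≤ kthSmallest (fun i : Fin m => S i.castSucc ω) k} := fun ω hω =>
    le_kthSmallest_of_card_filter_lt _ hk hkm
      ((card_filter_castSucc_le (Φ ω · < Φ ω (Fin.last m))).trans_lt hω)
  calc (k : ℝ≥0∞) ≤ ∑ j, P (A j) := hsum
    _ = (m + 1) * P (A (Fin.last m)) := by simp [hequal]
    _ ≤ _ := by gcongr

theorem mem_Icc_sub_add_iff_max_le {a b q y : ℝ} :
    y ∈ Icc (a - q) (b + q) ↔ max (a - y) (y - b) ≤ q := by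
  rw [Set.mem_Icc, max_le_iff]
  constructor <;> rintro ⟨h₁, h₂⟩ <;> constructor <;> linarith

/-- Coverage of conformalized quantile regression (CQR). -/
theorem stmt_13 {Ω 𝒳 : Type*} [MeasurableSpace Ω] [MeasurableSpace 𝒳]
    (P : Measure Ω) [IsProbabilityMeasure P]
    (n : ℕ) (V : Fin (n+1) → Ω → 𝒳 × ℝ) (hmeas : ∀ i, Measurable (V i))
    (hexch : ∀ σ : Equiv.Perm (Fin (n+1)),
      Measure.map (fun ω i => V (σ i) ω) P = Measure.map (fun ω i => V i ω) P)
    (qlo qhi : 𝒳 → ℝ) (hlo : Measurable qlo) (hhi : Measurable qhi)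
    (E : Fin (n+1) → Ω → ℝ)
    (hE : ∀ i ω, E i ω = max (qlo (V i ω).1 - (V i ω).2) ((V i ω).2 - qhi (V i ω).1))
    (α : ℝ) (hα : α ∈ Set.Ioo (0:ℝ) 1)
    (k : ℕ) (hk : (k : ℤ) = ⌈((n:ℝ)+1)*(1-α)⌉) (hkn : k ≤ n)
    (Q : Ω → ℝ) (hQ : ∀ ω, Q ω = kthSmallest (fun i : Fin n => E i.castSucc ω) k) :
    P {ω | (V (Fin.last n) ω).2 ∈
        Set.Icc (qlo (V (Fin.last n) ω).1 - Q ω) (qhi (V (Fin.last n) ω).1 + Q ω)} ≥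
      ENNReal.ofReal (1-α) := by
  obtain ⟨-, hα1⟩ := hα
  have hceil : ((n : ℝ) + 1) * (1 - α) ≤ k := by exact_mod_cast hk ▸ Int.le_ceil _
  have hk1 : 1 ≤ k := by
    have : (1 : ℤ) ≤ k := hk ▸ Int.ceil_pos.2 (mul_pos (by positivity) (by linarith))
    exact_mod_cast this
  have hscore : Measurable fun p : 𝒳 × ℝ => max (qlo p.1 - p.2) (p.2 - qhi p.1) := by fun_prop
  obtain rfl : E = fun i ω => max (qlo (V i ω).1 - (V i ω).2) ((V i ω).2 - qhi (V i ω).1) :=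
    funext₂ hE
  have hcover := (Exchangeable.comp hexch hmeas hscore).natCast_le_mul_measure_le_kthSmallest
    (fun i => hscore.comp (hmeas i)) hk1 hkn
  simp only [← hQ, ← mem_Icc_sub_add_iff_max_le] at hcover
  have hlevel : ENNReal.ofReal (1 - α) * (n + 1) ≤ k :=
    calc ENNReal.ofReal (1 - α) * (n + 1) = ENNReal.ofReal ((1 - α) * (n + 1)) := by
          rw [ENNReal.ofReal_mul (by linarith)]; norm_cast
      _ ≤ k := by simpa using ENNReal.ofReal_le_ofReal (by linarith : (1 - α) * (n + 1) ≤ k)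
  calc ENNReal.ofReal (1 - α) ≤ k / (n + 1) :=
        (ENNReal.le_div_iff_mul_le (by simp) (by simp)).2 hlevel
    _ ≤ _ := ENNReal.div_le_of_le_mul' hcover
end
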